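/- Let ψ = a₀e₀ + a₁e₁ ∈ ℂ² with |a₀|² + |a₁|² = 1, and let M be the 2×2 complex matrix with entries M₀₀ = 2|a₀|² − |a₁|², M₀₁ = 3·a₀·conj(a₁), M₁₀ = 3·conj(a₀)·a₁, M₁₁ = 2|a₁|² − |a₀|². Then Γ₀[M] = ψψ†; that is, M is the image of the rank-one projection ψψ† under the inverse of the channel Γ₀. -/
import Mathlib

noncomputable section

def outer {d : ℕ} (u : Fin d → ℂ) : Matrix (Fin d) (Fin d) ℂ :=
  Matrix.of fun i j => u i * (starRingEnd ℂ) (u j)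

def Hgate : Matrix (Fin 2) (Fin 2) ℂ :=
  (((Real.sqrt 2)⁻¹ : ℝ) : ℂ) • !![1, 1; 1, -1]

def Sgate : Matrix (Fin 2) (Fin 2) ℂ := !![1, 0; 0, Complex.I]

def gmat : Fin 3 → Matrix (Fin 2) (Fin 2) ℂ := ![1, Hgate, Sgate.conjTranspose * Hgate]

def stdb (b : Fin 2) : Fin 2 → ℂ := Pi.single b 1

def shadowChannel (O : Matrix (Fin 2) (Fin 2) ℂ) : Matrix (Fin 2) (Fin 2) ℂ :=
  (3 : ℂ)⁻¹ • ∑ u : Fin 3, ∑ b : Fin 2,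
    ((gmat u).conjTranspose * O * gmat u) b b • outer ((gmat u).mulVec (stdb b))

set_option maxHeartbeats 1000000 in
theorem inverse_shadow_channel_formula
    (a₀ a₁ : ℂ) (h : Complex.normSq a₀ + Complex.normSq a₁ = 1) :
    shadowChannel
        !![((2 * Complex.normSq a₀ - Complex.normSq a₁ : ℝ) : ℂ),
             3 * a₀ * (starRingEnd ℂ) a₁;
           3 * (starRingEnd ℂ) a₀ * a₁,
             ((2 * Complex.normSq a₁ - Complex.normSq a₀ : ℝ) : ℂ)]
      = outer ![a₀, a₁] := by
  set s : ℂ := (((Real.sqrt 2)⁻¹ : ℝ) : ℂ) with hsdef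
  have hs2 : s ^ 2 = 2⁻¹ := by
    rw [hsdef, ← Complex.ofReal_pow]
    norm_num [Real.sq_sqrt]
  have hsconj : (starRingEnd ℂ) s = s := Complex.conj_ofReal _
  have hc : a₀ * (starRingEnd ℂ) a₀ + a₁ * (starRingEnd ℂ) a₁ = 1 := by
    rw [Complex.mul_conj, Complex.mul_conj]
    exact_mod_cast h
  have hn0 : ((Complex.normSq a₀ : ℝ) : ℂ) = a₀ * (starRingEnd ℂ) a₀ := (Complex.mul_conj a₀).symm
  have hn1 : ((Complex.normSq a₁ : ℝ) : ℂ) = a₁ * (starRingEnd ℂ) a₁ := (Complex.mul_conj a₁).symm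
  have hg0 : gmat 0 = !![1, 0; 0, 1] := by
    simp [gmat, Matrix.one_fin_two]
  have hg1 : gmat 1 = !![s, s; s, -s] := by
    ext i j
    fin_cases i <;> fin_cases j <;> simp [gmat, Hgate, hsdef]
  have hg2 : gmat 2 = !![s, s; -(Complex.I * s), Complex.I * s] := by
    ext i j
    fin_cases i <;> fin_cases j <;>
      simp [gmat, Hgate, Sgate, Matrix.mul_apply, Fin.sum_univ_two, hsdef,
        Matrix.conjTranspose_apply] <;> ring
  have hstdb0 : stdb 0 = ![1, 0] := by
    funext i; fin_cases i <;> simp [stdb]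
  have hstdb1 : stdb 1 = ![0, 1] := by
    funext i; fin_cases i <;> simp [stdb]
  ext i j
  fin_cases i <;> fin_cases j <;>
  · simp only [shadowChannel, Fin.sum_univ_three, Fin.sum_univ_two, hg0, hg1, hg2,
      hstdb0, hstdb1, outer, Matrix.mul_apply, Matrix.mulVec, dotProduct,
      Matrix.conjTranspose_apply, Matrix.smul_apply, Matrix.add_apply, Matrix.of_apply,
      Matrix.cons_val', Matrix.cons_val_zero, Matrix.cons_val_one, Matrix.head_cons,
      Matrix.empty_val', Matrix.cons_val_fin_one, Matrix.head_fin_const, Fin.isValue,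
      map_mul, map_one, map_zero, map_neg, hsconj, Complex.conj_I, smul_eq_mul,
      hn0, hn1, Complex.ofReal_sub, Complex.ofReal_mul, Complex.ofReal_ofNat,
      Complex.star_def, Fin.mk_zero, Fin.mk_one, star_one, star_zero]
    ring_nf
    simp only [map_mul, map_neg, map_one, map_zero, hsconj, Complex.conj_I]
    ring_nf
    simp only [Complex.I_sq, hsconj]
    ring_nf
    try simp only [Complex.I_sq, Complex.I_pow_four, neg_neg]
    try rw [show s ^ 4 = (s ^ 2) ^ 2 by ring, hs2]
    try rw [hs2]
    first
      | ring1
      | linear_combination (norm := ring_nf) hc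
      | linear_combination (norm := ring_nf) -hc
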